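/- (Mass conservation for the Fokker–Planck vector field) Let G be a countable, locally uniformly finite weighted graph with symmetric weights, Ψ a potential with |Ψ(x_j)−Ψ(x_i)| ≤ C_Ψ on edges, and ρ a positive probability density on V. Then the series Σ_i Σ_{j∼i} ω_{ij}[(Ψ_j + log ρ_j) − (Ψ_i + log ρ_i)] ρ̂(x_i,x_j) converges absolutely and equals 0. -/
import Mathlib


noncomputable def logMean (a b : ℝ) : ℝ :=
  if a = b then a else (a - b) / (Real.log a - Real.log b)

lemma logMean_symm (a b : ℝ) : logMean a b = logMean b a := by
  unfold logMean
  rcases eq_or_ne a b with h | h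
  · simp [h]
  · rw [if_neg h, if_neg (Ne.symm h), ← neg_div_neg_eq]; ring_nf

lemma logMean_nonneg {a b : ℝ} (ha : 0 < a) (hb : 0 < b) : 0 ≤ logMean a b := by
  unfold logMean
  rcases eq_or_ne a b with h | h
  · simp [h]; linarith
  · rw [if_neg h]
    rcases lt_or_gt_of_ne h with hlt | hlt
    · rw [div_nonneg_iff]
      right
      constructor
      · linarith
      · have := Real.log_le_log ha (le_of_lt hlt); linarith
    · have h1 : 0 ≤ a - b := by linarith
      have h2 : 0 ≤ Real.log a - Real.log b := by
        have := Real.log_le_log hb (le_of_lt hlt); linarith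
      exact div_nonneg h1 h2

lemma logMean_le_add {a b : ℝ} (ha : 0 < a) (hb : 0 < b) : logMean a b ≤ a + b := by
  have key : ∀ x y : ℝ, 0 < x → 0 < y → y < x → logMean x y ≤ x + y := by
    intro x y hx hy hxy
    unfold logMean
    rw [if_neg (ne_of_gt hxy)]
    have hlog : Real.log y - Real.log x ≤ y / x - 1 := by
      have := Real.log_le_sub_one_of_pos (div_pos hy hx)
      rwa [Real.log_div (ne_of_gt hy) (ne_of_gt hx)] at this
    have hpos : 0 < Real.log x - Real.log y := by
      have := Real.log_lt_log hy hxy; linarith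
    rw [div_le_iff₀ hpos]
    have : x - y ≤ x * (Real.log x - Real.log y) := by
      have h2 : x * (Real.log y - Real.log x) ≤ x * (y / x - 1) := by
        apply mul_le_mul_of_nonneg_left hlog (le_of_lt hx)
      have h3 : x * (y / x) = y := by field_simp
      nlinarith
    nlinarith
  rcases lt_trichotomy a b with h | h | h
  · rw [logMean_symm]; have := key b a hb ha h; linarith
  · unfold logMean; rw [if_pos h]; linarith
  · exact key a b ha hb h

lemma log_mul_logMean {a b : ℝ} (ha : 0 < a) (hb : 0 < b) :
    (Real.log a - Real.log b) * logMean a b = a - b := by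
  unfold logMean
  rcases eq_or_ne a b with h | h
  · simp [h]
  · rw [if_neg h]
    have hlog : Real.log a - Real.log b ≠ 0 := by
      intro hc
      exact h (Real.log_injOn_pos (Set.mem_Ioi.2 ha) (Set.mem_Ioi.2 hb) (by linarith))
    field_simp

noncomputable def rhat (ρ : ℕ → ℝ) (i j : ℕ) : ℝ :=
  if 0 < ρ i ∧ 0 < ρ j then logMean (ρ i) (ρ j) else 0

/-- Mass conservation for the Fokker–Planck vector field: the doubly-indexed series
converges (absolutely, since the terms are real) and sums to zero. -/
theorem fokker_planck_mass_conservation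
    (ω : ℕ → ℕ → ℝ) (π : ℕ → ℝ) (ρ Ψ : ℕ → ℝ) (CΨ : ℝ) (C_V : ℕ)
    (hω_nonneg : ∀ i j, 0 ≤ ω i j)
    (hω_symm : ∀ i j, ω i j = ω j i)
    (hfin : ∀ i, {j | ω i j ≠ 0}.Finite)
    (hdeg : ∀ i, {j | ω i j ≠ 0}.ncard ≤ C_V)
    (hπ : ∀ i, π i = ∑' j, ω i j)
    (hπ_pos : ∀ i, 0 < π i)
    (hCΨ : 0 < CΨ)
    (hgrad : ∀ i j, ω i j ≠ 0 → |Ψ j - Ψ i| ≤ CΨ)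
    (hρ_pos : ∀ i, 0 < ρ i)
    (hρ_sum : Summable (fun i => ρ i * π i)) (hρ_prob : ∑' i, ρ i * π i = 1) :
    Summable (fun p : ℕ × ℕ => ω p.1 p.2 *
        ((Ψ p.2 + Real.log (ρ p.2)) - (Ψ p.1 + Real.log (ρ p.1))) * rhat ρ p.1 p.2) ∧
      ∑' p : ℕ × ℕ, ω p.1 p.2 *
        ((Ψ p.2 + Real.log (ρ p.2)) - (Ψ p.1 + Real.log (ρ p.1))) * rhat ρ p.1 p.2 = 0 := by
  set f : ℕ × ℕ → ℝ := fun p => ω p.1 p.2 *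
      ((Ψ p.2 + Real.log (ρ p.2)) - (Ψ p.1 + Real.log (ρ p.1))) * rhat ρ p.1 p.2 with hf
  -- rhat is just logMean here
  have hrhat : ∀ i j, rhat ρ i j = logMean (ρ i) (ρ j) := fun i j => by
    simp [rhat, hρ_pos i, hρ_pos j]
  -- Summability of g1 p = ω p.1 p.2 * ρ p.1
  have hg1 : Summable (fun p : ℕ × ℕ => ω p.1 p.2 * ρ p.1) := by
    rw [summable_prod_of_nonneg (fun p => mul_nonneg (hω_nonneg _ _) (le_of_lt (hρ_pos _)))]
    constructor
    · intro i
      apply summable_of_ne_finset_zero (s := (hfin i).toFinset)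
      intro j hj
      simp only [Set.Finite.mem_toFinset, Set.mem_setOf_eq, not_not] at hj
      simp [hj]
    · apply hρ_sum.congr
      intro i
      show ρ i * π i = ∑' j, ω i j * ρ i
      rw [tsum_mul_right, ← hπ i]
      ring
  -- Summability of g2 p = ω p.1 p.2 * ρ p.2
  have hg2 : Summable (fun p : ℕ × ℕ => ω p.1 p.2 * ρ p.2) := by
    have h := ((Equiv.prodComm ℕ ℕ).summable_iff
      (f := fun p : ℕ × ℕ => ω p.1 p.2 * ρ p.1)).2 hg1
    apply h.congr
    intro p
    simp [Equiv.prodComm, hω_symm p.1 p.2]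
  -- pointwise bound
  have hbound : ∀ p : ℕ × ℕ, |f p| ≤ (CΨ + 1) * (ω p.1 p.2 * ρ p.1 + ω p.1 p.2 * ρ p.2) := by
    rintro ⟨i, j⟩
    by_cases hωij : ω i j = 0
    · simp [hf, hωij]
    · have hL0 : 0 ≤ logMean (ρ i) (ρ j) := logMean_nonneg (hρ_pos i) (hρ_pos j)
      have hLle : logMean (ρ i) (ρ j) ≤ ρ i + ρ j := logMean_le_add (hρ_pos i) (hρ_pos j)
      have hprod : (Real.log (ρ j) - Real.log (ρ i)) * logMean (ρ i) (ρ j) = ρ j - ρ i := by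
        rw [logMean_symm]; exact log_mul_logMean (hρ_pos j) (hρ_pos i)
      have hΨ := hgrad i j hωij
      have hωpos : 0 ≤ ω i j := hω_nonneg i j
      show |ω i j * ((Ψ j + Real.log (ρ j)) - (Ψ i + Real.log (ρ i))) * rhat ρ i j| ≤ _
      rw [hrhat, abs_mul, abs_mul, abs_of_nonneg hωpos, abs_of_nonneg hL0]
      have h1 : |Ψ j + Real.log (ρ j) - (Ψ i + Real.log (ρ i))|
          ≤ CΨ + |Real.log (ρ j) - Real.log (ρ i)| := by
        calc |Ψ j + Real.log (ρ j) - (Ψ i + Real.log (ρ i))|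
            = |(Ψ j - Ψ i) + (Real.log (ρ j) - Real.log (ρ i))| := by ring_nf
          _ ≤ |Ψ j - Ψ i| + |Real.log (ρ j) - Real.log (ρ i)| := abs_add_le _ _
          _ ≤ _ := by linarith
      have h2 : |Real.log (ρ j) - Real.log (ρ i)| * logMean (ρ i) (ρ j) = |ρ j - ρ i| := by
        rw [← abs_of_nonneg hL0, ← abs_mul, hprod]
      have h3 : |ρ j - ρ i| ≤ ρ i + ρ j := by
        rw [abs_le]
        constructor <;> [linarith [hρ_pos i, hρ_pos j]; linarith [hρ_pos i, hρ_pos j]]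
      calc ω i j * |Ψ j + Real.log (ρ j) - (Ψ i + Real.log (ρ i))| * logMean (ρ i) (ρ j)
          ≤ ω i j * (CΨ + |Real.log (ρ j) - Real.log (ρ i)|) * logMean (ρ i) (ρ j) :=
            mul_le_mul_of_nonneg_right (mul_le_mul_of_nonneg_left h1 hωpos) hL0
        _ = ω i j * (CΨ * logMean (ρ i) (ρ j)
              + |Real.log (ρ j) - Real.log (ρ i)| * logMean (ρ i) (ρ j)) := by ring
        _ = ω i j * (CΨ * logMean (ρ i) (ρ j) + |ρ j - ρ i|) := by rw [h2]
        _ ≤ ω i j * (CΨ * (ρ i + ρ j) + (ρ i + ρ j)) := by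
            apply mul_le_mul_of_nonneg_left _ hωpos
            have := mul_le_mul_of_nonneg_left hLle (le_of_lt hCΨ)
            linarith
        _ = (CΨ + 1) * (ω i j * ρ i + ω i j * ρ j) := by ring
  have hS : Summable f := by
    apply Summable.of_abs
    apply Summable.of_nonneg_of_le (fun p => abs_nonneg _) hbound
    exact (hg1.add hg2).mul_left (CΨ + 1)
  refine ⟨hS, ?_⟩
  have hswap : ∀ p : ℕ × ℕ, f p.swap = - f p := by
    rintro ⟨i, j⟩
    show ω j i * ((Ψ i + Real.log (ρ i)) - (Ψ j + Real.log (ρ j))) * rhat ρ j i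
      = -(ω i j * ((Ψ j + Real.log (ρ j)) - (Ψ i + Real.log (ρ i))) * rhat ρ i j)
    rw [hrhat, hrhat, hω_symm j i, logMean_symm (ρ j)]
    ring
  have he : ∑' p : ℕ × ℕ, f ((Equiv.prodComm ℕ ℕ) p) = ∑' p, f p :=
    (Equiv.prodComm ℕ ℕ).tsum_eq f
  have he2 : ∑' p : ℕ × ℕ, f ((Equiv.prodComm ℕ ℕ) p) = - ∑' p, f p := by
    rw [show (fun p : ℕ × ℕ => f ((Equiv.prodComm ℕ ℕ) p)) = fun p => - f p from
      funext fun p => hswap p, tsum_neg]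
  linarith [he, he2]
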